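/- arXiv:1405.7923 — 2 statements merged into one kernel-verified Lean document; each statement's English description precedes it below -/
import Mathlib

section
/- Let L be an image-finite labelled transition system and let B be a set of pairs of states of L with LeastEqLev(B) > 0. Then there exists a set B' of pairs of states such that B ⊐ B' (B' is a minimal expansion for B) and LeastEqLev(B') ≥ LeastEqLev(B) − 1. In particular, if B ⊆ ∼ (every pair in B is bisimilar), then B ⊐ B' for some B' ⊆ ∼. -/
/-- A labelled transition system with states `S` and actions `A`. -/
structure LTS (S : Type*) (A : Type*) where
  Tr : A → S → S → Prop

namespace LTS

variable {S A : Type*}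

/-- An LTS is image-finite if each state has finitely many `a`-successors. -/
def ImageFinite (L : LTS S A) : Prop := ∀ a s, {t | L.Tr a s t}.Finite

/-- A set `B` of pairs of states covers the pair `p`. -/
def Covers (L : LTS S A) (B : Set (S × S)) (p : S × S) : Prop :=
  (∀ a s', L.Tr a p.1 s' → ∃ t', L.Tr a p.2 t' ∧ (s', t') ∈ B) ∧
  (∀ a t', L.Tr a p.2 t' → ∃ s', L.Tr a p.1 s' ∧ (s', t') ∈ B)

/-- `B'` covers the set `B` (i.e., covers each of its pairs). -/
def CoversSet (L : LTS S A) (B' B : Set (S × S)) : Prop := ∀ p ∈ B, L.Covers B' p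

/-- `B ⊐ B'`: `B'` is a minimal expansion for `B`. -/
def MinExp (L : LTS S A) (B B' : Set (S × S)) : Prop :=
  L.CoversSet B' B ∧ ∀ B'', B'' ⊂ B' → ¬ L.CoversSet B'' B

/-- The stratified equivalences: `∼_0` is everything, `∼_{k+1}` are the pairs covered by `∼_k`. -/
def simN (L : LTS S A) : ℕ → Set (S × S)
  | 0 => Set.univ
  | k + 1 => {p | L.Covers (L.simN k) p}

/-- `eqlevel(s,t) ∈ ℕ ∪ {ω}`: the largest `e` with `s ∼_e t` (`⊤` plays the role of `ω`,
meaning `s ∼_k t` for all `k ∈ ℕ`). -/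
noncomputable def eqlevel (L : LTS S A) (s t : S) : ℕ∞ :=
  sSup {e : ℕ∞ | ∃ k : ℕ, e = (k : ℕ∞) ∧ (s, t) ∈ L.simN k}

/-- `LeastEqLev(B) = min {eqlevel(s,t) | (s,t) ∈ B}`, with `min ∅ = ω = ⊤`. -/
noncomputable def leastEqLev (L : LTS S A) (B : Set (S × S)) : ℕ∞ :=
  sInf {e : ℕ∞ | ∃ p ∈ B, e = L.eqlevel p.1 p.2}

/-- `B` is a bisimulation if it covers itself. -/
def Bisimulation (L : LTS S A) (B : Set (S × S)) : Prop := L.CoversSet B B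

/-- `s ∼ t`: some bisimulation contains `(s,t)`. -/
def Bisim (L : LTS S A) (s t : S) : Prop := ∃ B, L.Bisimulation B ∧ (s, t) ∈ B

end LTS

/-!
A pair at equivalence level `≥ e + 1` is covered by the pairs at level `≥ e`. For `e = ω` this
needs image-finiteness: a downward directed family of sets, each meeting the finite set of
`a`-successors of a state, has a common point in it. The same compactness argument shows that
sets covering `B` are closed under intersections of chains, so by Zorn's lemma the set of pairs at
level `≥ LeastEqLev(B) − 1` contains a minimal expansion of `B`. Bisimilar pairs are exactly
those at level `ω`, which gives the second claim.
-/

theorem Set.Finite.exists_mem_forall_mem_of_directed {α ι : Type*} [Nonempty ι] {F : Set α}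
    (hF : F.Finite) {f : ι → Set α} (hf : Directed (· ⊇ ·) f) (h : ∀ i, ∃ x ∈ F, x ∈ f i) :
    ∃ x ∈ F, ∀ i, x ∈ f i := by
  classical
  by_contra! hne
  choose g hg using hne
  have : Fintype F := hF.fintype
  obtain ⟨z, hz⟩ := hf.finset_le (Finset.univ.image fun x : F => g x x.2)
  obtain ⟨x, hxF, hxz⟩ := h z
  exact hg x hxF (hz _ (Finset.mem_image_of_mem _ (Finset.mem_univ ⟨x, hxF⟩)) hxz)

namespace LTS

open Set

variable {S A : Type*} {L : LTS S A}

theorem Covers.mono {B B' : Set (S × S)} (h : B ⊆ B') {p : S × S} (hp : L.Covers B p) :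
    L.Covers B' p :=
  ⟨fun a s' hs' => (hp.1 a s' hs').imp fun _ => And.imp_right (@h _),
    fun a t' ht' => (hp.2 a t' ht').imp fun _ => And.imp_right (@h _)⟩

theorem covers_iInter (hfin : L.ImageFinite) {ι : Type*} [Nonempty ι] {f : ι → Set (S × S)}
    (hf : Directed (· ⊇ ·) f) {p : S × S} (h : ∀ i, L.Covers (f i) p) :
    L.Covers (⋂ i, f i) p := by
  constructor
  · intro a s' hs'
    have hdir : Directed (· ⊇ ·) fun i => Prod.mk s' ⁻¹' f i :=
      hf.mono_comp (· ⊇ ·) (g := preimage (Prod.mk s')) fun _ _ h => preimage_mono h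
    obtain ⟨t', ht', hmem⟩ :=
      (hfin a p.2).exists_mem_forall_mem_of_directed hdir fun i => (h i).1 a s' hs'
    exact ⟨t', ht', mem_iInter.2 hmem⟩
  · intro a t' ht'
    have hdir : Directed (· ⊇ ·) fun i => (fun s' => (s', t')) ⁻¹' f i :=
      hf.mono_comp (· ⊇ ·) (g := preimage fun s' => (s', t')) fun _ _ h => preimage_mono h
    obtain ⟨s', hs', hmem⟩ :=
      (hfin a p.1).exists_mem_forall_mem_of_directed hdir fun i => (h i).2 a t' ht'
    exact ⟨s', hs', mem_iInter.2 hmem⟩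

theorem coversSet_sInter (hfin : L.ImageFinite) {B : Set (S × S)} {c : Set (Set (S × S))}
    (hc : IsChain (· ⊆ ·) c) (hne : c.Nonempty) (hcov : ∀ C ∈ c, L.CoversSet C B) :
    L.CoversSet (⋂₀ c) B := by
  have : Nonempty c := hne.to_subtype
  intro p hp
  rw [sInter_eq_iInter]
  have hdir : Directed (· ⊇ ·) (Subtype.val : c → Set (S × S)) := fun C D =>
    (hc.total C.2 D.2).elim (fun h => ⟨C, subset_rfl, h⟩) fun h => ⟨D, h, subset_rfl⟩
  exact covers_iInter hfin hdir fun C => hcov C C.2 p hp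

theorem minExp_of_minimal {B B' : Set (S × S)} (h : Minimal (L.CoversSet · B) B') :
    L.MinExp B B' :=
  ⟨h.prop, fun _ hlt hcov => hlt.ne (h.eq_of_subset hcov hlt.subset)⟩

theorem exists_minExp_subset (hfin : L.ImageFinite) {B B₀ : Set (S × S)}
    (hcov : L.CoversSet B₀ B) : ∃ B' ⊆ B₀, L.MinExp B B' := by
  obtain ⟨B', hsub, hmin⟩ := zorn_superset_nonempty {C | L.CoversSet C B}
    (fun c hcS hc hne => ⟨⋂₀ c, coversSet_sInter hfin hc hne hcS, fun _ => sInter_subset_of_mem⟩)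
    B₀ hcov
  exact ⟨B', hsub, minExp_of_minimal hmin⟩

theorem simN_antitone : Antitone L.simN := by
  refine antitone_nat_of_succ_le fun k => ?_
  induction k with
  | zero => exact subset_univ _
  | succ k ih => exact fun _ hp => hp.mono ih

theorem mem_simN_iff {s t : S} {k : ℕ} : (s, t) ∈ L.simN k ↔ (k : ℕ∞) ≤ L.eqlevel s t := by
  refine ⟨fun h => le_sSup ⟨k, rfl, h⟩, fun h => ?_⟩
  cases k with
  | zero => trivial
  | succ k =>
    obtain ⟨_, ⟨m, rfl, hm⟩, hkm⟩ := lt_sSup_iff.1 ((Nat.cast_lt.2 k.lt_succ_self).trans_le h)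
    exact simN_antitone (Nat.cast_lt.1 hkm) hm

theorem setOf_natCast_le_eqlevel (n : ℕ) :
    {q : S × S | (n : ℕ∞) ≤ L.eqlevel q.1 q.2} = L.simN n :=
  ext fun _ => mem_simN_iff.symm

theorem setOf_top_le_eqlevel : {q : S × S | ⊤ ≤ L.eqlevel q.1 q.2} = ⋂ k, L.simN k := by
  ext q
  simp only [mem_ofPred_eq, top_le_iff, ENat.eq_top_iff_forall_ge, mem_iInter, ← mem_simN_iff]

theorem covers_setOf_le_eqlevel (hfin : L.ImageFinite) {e : ℕ∞} {p : S × S}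
    (hp : e + 1 ≤ L.eqlevel p.1 p.2) : L.Covers {q | e ≤ L.eqlevel q.1 q.2} p := by
  induction e using ENat.recTopCoe with
  | top =>
    rw [setOf_top_le_eqlevel]
    exact covers_iInter hfin simN_antitone.directed_ge fun k =>
      (mem_simN_iff (k := k + 1)).2 (le_top.trans (by simpa using hp))
  | coe n =>
    rw [setOf_natCast_le_eqlevel]
    exact mem_simN_iff.2 (by exact_mod_cast hp)

theorem Bisimulation.subset_simN {R : Set (S × S)} (hR : L.Bisimulation R) (k : ℕ) :
    R ⊆ L.simN k := by
  induction k with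
  | zero => exact subset_univ R
  | succ k ih => exact fun p hp => (hR p hp).mono ih

theorem bisim_iff_eqlevel_eq_top (hfin : L.ImageFinite) {s t : S} :
    L.Bisim s t ↔ L.eqlevel s t = ⊤ := by
  refine ⟨fun ⟨R, hR, hst⟩ => ENat.eq_top_iff_forall_ge.2 fun k => ?_, fun h => ?_⟩
  · exact mem_simN_iff.1 (hR.subset_simN k hst)
  · refine ⟨{q | ⊤ ≤ L.eqlevel q.1 q.2}, fun p hp => ?_, top_le_iff.2 h⟩
    exact covers_setOf_le_eqlevel hfin (by simpa using hp)

theorem le_leastEqLev_iff {B : Set (S × S)} {e : ℕ∞} :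
    e ≤ L.leastEqLev B ↔ ∀ p ∈ B, e ≤ L.eqlevel p.1 p.2 := by
  simp only [leastEqLev, le_sInf_iff, mem_ofPred_eq]
  exact ⟨fun h p hp => h _ ⟨p, hp, rfl⟩, fun h _ ⟨p, hp, he⟩ => he ▸ h p hp⟩

theorem exists_minExp_le_eqlevel (hfin : L.ImageFinite) {B : Set (S × S)} {e : ℕ∞}
    (h : ∀ p ∈ B, e + 1 ≤ L.eqlevel p.1 p.2) :
    ∃ B', L.MinExp B B' ∧ ∀ q ∈ B', e ≤ L.eqlevel q.1 q.2 := by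
  obtain ⟨B', hsub, hmin⟩ :=
    exists_minExp_subset hfin fun p hp => covers_setOf_le_eqlevel hfin (h p hp)
  exact ⟨B', hmin, hsub⟩

end LTS

/-- If `L` is image-finite and `LeastEqLev(B) > 0`, then there is a minimal
expansion `B'` for `B` with `LeastEqLev(B') ≥ LeastEqLev(B) − 1` (with `ω − 1 = ω`).
In particular, if every pair in `B` is bisimilar, then `B ⊐ B'` for some `B'` consisting
of bisimilar pairs only. -/
theorem exists_min_expansion_of_leastEqLev_pos {S A : Type*} (L : LTS S A)
    (hfin : L.ImageFinite) (B : Set (S × S)) (hB : 0 < L.leastEqLev B) :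
    (∃ B' : Set (S × S), L.MinExp B B' ∧ L.leastEqLev B - 1 ≤ L.leastEqLev B') ∧
    ((∀ p ∈ B, L.Bisim p.1 p.2) →
      ∃ B' : Set (S × S), L.MinExp B B' ∧ ∀ p ∈ B', L.Bisim p.1 p.2) := by
  refine ⟨?_, fun hbisim => ?_⟩
  · have hpred : L.leastEqLev B - 1 + 1 = L.leastEqLev B :=
      tsub_add_cancel_of_le (Order.one_le_iff_pos.2 hB)
    obtain ⟨B', hmin, hlev⟩ := L.exists_minExp_le_eqlevel hfin (e := L.leastEqLev B - 1)
      (hpred ▸ LTS.le_leastEqLev_iff.1 le_rfl)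
    exact ⟨B', hmin, LTS.le_leastEqLev_iff.2 hlev⟩
  · obtain ⟨B', hmin, htop⟩ := L.exists_minExp_le_eqlevel hfin (e := ⊤) fun p hp => by
      simp [(LTS.bisim_iff_eqlevel_eq_top hfin).1 (hbisim p hp)]
    exact ⟨B', hmin, fun q hq => (LTS.bisim_iff_eqlevel_eq_top hfin).2 (top_le_iff.1 (htop q hq))⟩
end

section
/- Let G = (N, Act, R) be a first-order grammar and b ∈ ℕ. Then there exists m ∈ ℕ such that every pair (E,F) of regular terms over N with pressize(E) + pressize(F) ≤ b and E ≁ F (E not bisimilar with F in L^act_G) satisfies eqlevel(E,F) ≤ m. (In other words, MaxEqLev(Size_{≤b} ∩ ≁) is a finite number.) -/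
/-- The "signature" of a first-order grammar: a finite set of ranked nonterminals
(represented as `Fin ntCount`, with arities) and a finite set of actions
(represented as `Fin actCount`). -/
structure GrammarSig where
  ntCount : ℕ
  arity : Fin ntCount → ℕ
  actCount : ℕ

/-- The polynomial functor whose coinductive fixed point is the set of (finite or
infinite) terms over the nonterminals: a node is labelled either by a nonterminal
`A` (with `arity A` ordered children) or by a variable `x_n`, `n : ℕ` (a leaf). -/
def GrammarSig.P (S : GrammarSig) : PFunctor :=
  ⟨Fin S.ntCount ⊕ ℕ, fun l =>
    match l with
    | Sum.inl A => Fin (S.arity A)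
    | Sum.inr _ => Empty⟩

/-- Terms over the signature `S`: finite or infinite ordered trees with nodes labelled
by nonterminals (inner nodes) or variables (leaves). -/
def GTerm (S : GrammarSig) := PFunctor.M S.P

/-- The term consisting of the single variable `x_n`. -/
def GTerm.var (S : GrammarSig) (n : ℕ) : GTerm S :=
  PFunctor.M.mk ⟨Sum.inr n, fun e => e.elim⟩

/-- The term `A(c 0, …, c (m-1))`. -/
def GTerm.app {S : GrammarSig} (A : Fin S.ntCount) (c : Fin (S.arity A) → GTerm S) :
    GTerm S :=
  PFunctor.M.mk ⟨Sum.inl A, c⟩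

/-- Applying a substitution `σ` to a term `T`: every occurrence of a variable `x_n`
in `T` is replaced by `σ n` (defined corecursively). -/
def GTerm.subst {S : GrammarSig} (σ : ℕ → GTerm S) (T : GTerm S) : GTerm S :=
  PFunctor.M.corec
    (fun st : Bool × GTerm S =>
      match PFunctor.M.dest st.2 with
      | ⟨Sum.inl A, c⟩ => ⟨Sum.inl A, fun i => (st.1, c i)⟩
      | ⟨Sum.inr n, _⟩ =>
        if st.1 then
          ⟨(PFunctor.M.dest (σ n)).1, fun i => (false, (PFunctor.M.dest (σ n)).2 i)⟩
        else ⟨Sum.inr n, fun e => e.elim⟩)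
    (true, T)

/-- A substitution (as a total map `ℕ → GTerm S`) has finite support. -/
def FinSupp {S : GrammarSig} (σ : ℕ → GTerm S) : Prop :=
  {n | σ n ≠ GTerm.var S n}.Finite

/-- `childRel S T T'`: `T'` is a root-successor (depth-1 subterm occurrence) of `T`. -/
def childRel (S : GrammarSig) : GTerm S → GTerm S → Prop := fun T T' =>
  ∃ (A : Fin S.ntCount) (c : Fin (S.arity A) → GTerm S), T = GTerm.app A c ∧ ∃ i, T' = c i

/-- `T'` is a subterm of `T`. -/
def SubtermOf (S : GrammarSig) (T' T : GTerm S) : Prop :=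
  Relation.ReflTransGen (childRel S) T T'

/-- The variable `x_n` occurs in `T`. -/
def VarOccurs (S : GrammarSig) (n : ℕ) (T : GTerm S) : Prop :=
  SubtermOf S (GTerm.var S n) T

/-- `OccAtDepth S d T V`: `V` has a subterm-occurrence in `T` at depth `d`. -/
inductive OccAtDepth (S : GrammarSig) : ℕ → GTerm S → GTerm S → Prop
  | refl (T : GTerm S) : OccAtDepth S 0 T T
  | step {d : ℕ} {T T' V : GTerm S} :
      childRel S T T' → OccAtDepth S d T' V → OccAtDepth S (d + 1) T V

/-- A term is regular if it has only finitely many distinct subterms. -/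
def RegularT (S : GrammarSig) (T : GTerm S) : Prop := {T' | SubtermOf S T' T}.Finite

/-- The presentation size of a (regular) term: the number of its distinct subterms. -/
noncomputable def pressize (S : GrammarSig) (T : GTerm S) : ℕ :=
  {T' | SubtermOf S T' T}.ncard

/-- Finite terms over the signature `S`. -/
inductive FTerm (S : GrammarSig) where
  | var : ℕ → FTerm S
  | app : (A : Fin S.ntCount) → (Fin (S.arity A) → FTerm S) → FTerm S

/-- The (finite or infinite) term corresponding to a finite term. -/
def FTerm.toTerm {S : GrammarSig} : FTerm S → GTerm S
  | .var n => GTerm.var S n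
  | .app A c => GTerm.app A (fun i => (c i).toTerm)

/-- The variable `x_n` occurs in the finite term `E`. -/
def FTerm.VOccurs {S : GrammarSig} (n : ℕ) : FTerm S → Prop
  | .var m => m = n
  | .app _ c => ∃ i, (c i).VOccurs n

/-- The depth of a finite term (the largest depth of a subterm occurrence). -/
def FTerm.depth {S : GrammarSig} : FTerm S → ℕ
  | .var _ => 0
  | .app _ c => Finset.univ.sup fun i => (c i).depth + 1

/-- A rule `A(x_0, …, x_{m−1}) →ₐ E` of a first-order grammar: `E` is a finite term
all of whose variables are among `x_0, …, x_{m−1}` where `m = arity A`. -/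
structure GRule (S : GrammarSig) where
  nt : Fin S.ntCount
  act : Fin S.actCount
  rhs : FTerm S
  rhs_wf : ∀ n : ℕ, rhs.VOccurs n → n < S.arity nt

/-- A first-order grammar: a signature together with a finite set (list) of rules. -/
structure FOGrammar where
  sig : GrammarSig
  rules : List (GRule sig)

/-- The term `A(x_0, …, x_{m−1})` (the left-hand side of rules for `A`). -/
def lhsTerm {S : GrammarSig} (A : Fin S.ntCount) : GTerm S :=
  GTerm.app A fun i => GTerm.var S i.val

/-- The rule-based LTS `L^rul_G`: states are the terms, actions are the rules of `G`,
and a rule `r : A(x_0,…,x_{m−1}) →ₐ E` induces `(A(x_0,…,x_{m−1}))σ →r Eσ` for every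
substitution `σ`. -/
def LTSrul (G : FOGrammar) : LTS (GTerm G.sig) (GRule G.sig) where
  Tr r T T' := r ∈ G.rules ∧ ∃ σ : ℕ → GTerm G.sig, FinSupp σ ∧
    T = GTerm.subst σ (lhsTerm r.nt) ∧ T' = GTerm.subst σ r.rhs.toTerm

/-- The action-based LTS `L^act_G`: the transitions of `L^rul_G` relabelled by the
actions of the rules; in addition each variable `x_n` has its own fresh action
(represented by `Sum.inr n`) with the single transition `x_n →_{a_{x_n}} x_n`. -/
def LTSact (G : FOGrammar) : LTS (GTerm G.sig) (Fin G.sig.actCount ⊕ ℕ) where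
  Tr a T T' :=
    match a with
    | Sum.inl a => ∃ r : GRule G.sig, r.act = a ∧ (LTSrul G).Tr r T T'
    | Sum.inr n => T = GTerm.var G.sig n ∧ T' = GTerm.var G.sig n

/-- `RPath G T w T'`: the path `T →w T'` in the rule-based LTS `L^rul_G`, `w ∈ R*`. -/
inductive RPath (G : FOGrammar) : GTerm G.sig → List (GRule G.sig) → GTerm G.sig → Prop
  | nil (T : GTerm G.sig) : RPath G T [] T
  | cons {T T1 T' : GTerm G.sig} {r : GRule G.sig} {w : List (GRule G.sig)} :
      (LTSrul G).Tr r T T1 → RPath G T1 w T' → RPath G T (r :: w) T'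

/-- `APath G T w T'`: the path `T →w T'` in the action-based LTS `L^act_G` for a word
`w ∈ Act*` of proper actions (using no special variable transitions). -/
inductive APath (G : FOGrammar) :
    GTerm G.sig → List (Fin G.sig.actCount) → GTerm G.sig → Prop
  | nil (T : GTerm G.sig) : APath G T [] T
  | cons {T T1 T' : GTerm G.sig} {a : Fin G.sig.actCount} {w : List (Fin G.sig.actCount)} :
      (LTSact G).Tr (Sum.inl a) T T1 → APath G T1 w T' → APath G T (a :: w) T'


/-!
Since `L^act_G` is image-finite, `⋂ₖ ∼ₖ` is a bisimulation, so non-bisimilar terms have a finite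
equivalence level. Renaming variables along a permutation of `ℕ` is an automorphism of `L^act_G`
and preserves equivalence levels, and the variables of two regular terms of total size at most `b`
can be renamed into `{0, …, b-1}`. Up to renaming there are then only finitely many such pairs,
because a regular term with at most `b` subterms unfolds a system of at most `b` equations over
finitely many labels; `m` is the largest equivalence level among them that is finite.
-/

theorem Set.Finite.exists_mem_forall_of_antitone {α : Type*} {X : Set α} (hX : X.Finite)
    {P : ℕ → α → Prop} (hP : ∀ x, Antitone fun k => P k x) (h : ∀ k, ∃ x ∈ X, P k x) :
    ∃ x ∈ X, ∀ k, P k x := by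
  classical
  by_contra! hc
  choose! K hK using hc
  obtain ⟨x, hx, hPx⟩ := h (hX.toFinset.sup K)
  exact hK x hx (hP x (Finset.le_sup (hX.mem_toFinset.2 hx)) hPx)

namespace LTS

variable {St St' A A' : Type*}

theorem covers_mono (L : LTS St A) {B B' : Set (St × St)} (h : B ⊆ B') {p : St × St}
    (hp : L.Covers B p) : L.Covers B' p :=
  ⟨fun a s' hs' => (hp.1 a s' hs').imp fun _ ht => ⟨ht.1, h ht.2⟩,
    fun a t' ht' => (hp.2 a t' ht').imp fun _ hs => ⟨hs.1, h hs.2⟩⟩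

theorem simN_antitone_s14 (L : LTS St A) : Antitone L.simN := by
  refine antitone_nat_of_succ_le fun k => ?_
  induction k with
  | zero => exact Set.subset_univ _
  | succ k ih => exact fun p hp => L.covers_mono ih hp

theorem eqlevel_le_of_not_mem_simN (L : LTS St A) {s t : St} {k : ℕ}
    (h : (s, t) ∉ L.simN k) : L.eqlevel s t ≤ k := by
  refine sSup_le ?_
  rintro _ ⟨j, rfl, hj⟩
  exact Nat.cast_le.2 (le_of_not_gt fun hkj => h (L.simN_antitone_s14 hkj.le hj))

theorem bisimulation_setOf_forall_mem_simN (L : LTS St A) (hL : L.ImageFinite) :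
    L.Bisimulation {p | ∀ k, p ∈ L.simN k} := fun p hp =>
  ⟨fun a s' hs' => (hL a p.2).exists_mem_forall_of_antitone
      (fun _ _ _ hjk h => L.simN_antitone_s14 hjk h) fun k => (hp (k + 1)).1 a s' hs',
    fun a t' ht' => (hL a p.1).exists_mem_forall_of_antitone
      (fun _ _ _ hjk h => L.simN_antitone_s14 hjk h) fun k => (hp (k + 1)).2 a t' ht'⟩

theorem eqlevel_ne_top_of_not_bisim (L : LTS St A) (hL : L.ImageFinite) {s t : St}
    (h : ¬ L.Bisim s t) : L.eqlevel s t ≠ ⊤ := by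
  obtain ⟨k, hk⟩ : ∃ k, (s, t) ∉ L.simN k := by
    by_contra! hst
    exact h ⟨_, L.bisimulation_setOf_forall_mem_simN hL, hst⟩
  exact ne_top_of_le_ne_top (ENat.natCast_ne_top k) (L.eqlevel_le_of_not_mem_simN hk)

theorem mem_simN_iff_of_equiv (L : LTS St A) (L' : LTS St' A') (φ : St ≃ St') (ψ : A ≃ A')
    (hTr : ∀ a s t, L'.Tr (ψ a) (φ s) (φ t) ↔ L.Tr a s t) (k : ℕ) (s t : St) :
    (φ s, φ t) ∈ L'.simN k ↔ (s, t) ∈ L.simN k := by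
  induction k generalizing s t with
  | zero => exact Iff.rfl
  | succ k ih =>
    simp only [simN, Set.mem_ofPred_eq, Covers, ← ψ.forall_congr_right, ← φ.forall_congr_right,
      ← φ.exists_congr_right, hTr, ih]

theorem eqlevel_eq_of_equiv (L : LTS St A) (L' : LTS St' A') (φ : St ≃ St') (ψ : A ≃ A')
    (hTr : ∀ a s t, L'.Tr (ψ a) (φ s) (φ t) ↔ L.Tr a s t) (s t : St) :
    L'.eqlevel (φ s) (φ t) = L.eqlevel s t := by
  simp only [eqlevel, L.mem_simN_iff_of_equiv L' φ ψ hTr]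

end LTS

namespace GTerm

open PFunctor

variable {S : GrammarSig}

theorem mk_inr_eq_var (n : ℕ) (c : S.P.B (Sum.inr n) → GTerm S) :
    M.mk ⟨Sum.inr n, c⟩ = var S n := by
  congr
  exact Subsingleton.elim (α := Empty → GTerm S) _ _

theorem var_or_app (T : GTerm S) :
    (∃ n, T = var S n) ∨ ∃ (A : Fin S.ntCount) (c : Fin (S.arity A) → GTerm S), T = app A c := by
  rw [← M.mk_dest T]
  rcases M.dest T with ⟨A | n, c⟩
  · exact .inr ⟨A, c, rfl⟩
  · exact .inl ⟨n, mk_inr_eq_var n c⟩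

theorem eq_var_of_dest_fst_eq_inr {U : GTerm S} {n : ℕ} (h : (M.dest U).1 = Sum.inr n) :
    U = var S n := by
  rcases var_or_app U with ⟨m, rfl⟩ | ⟨A, c, rfl⟩
  · rw [Sum.inr_injective h]
  · exact absurd h Sum.inl_ne_inr

theorem var_injective : Function.Injective (var S) := fun _ _ h =>
  Sum.inr_injective (congrArg (fun T => (M.dest T).1) h)

theorem app_injective (A : Fin S.ntCount) : Function.Injective (app (S := S) A) :=
  fun _ _ h => eq_of_heq (Sigma.mk.inj (congrArg M.dest h)).2

theorem eq_of_bisim (R : GTerm S → GTerm S → Prop)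
    (hR : ∀ x y, R x y → (∃ n, x = var S n ∧ y = var S n) ∨
      ∃ (A : Fin S.ntCount) (c d : Fin (S.arity A) → GTerm S),
        x = app A c ∧ y = app A d ∧ ∀ i, R (c i) (d i))
    {x y : GTerm S} (h : R x y) : x = y := by
  refine M.bisim R (fun x y hxy => ?_) x y h
  rcases hR x y hxy with ⟨n, rfl, rfl⟩ | ⟨A, c, d, rfl, rfl, hcd⟩
  · exact ⟨Sum.inr n, _, _, rfl, rfl, fun e => e.elim⟩
  · exact ⟨Sum.inl A, c, d, rfl, rfl, hcd⟩

theorem childRel_dest (T : GTerm S) (i : S.P.B (M.dest T).1) : childRel S T ((M.dest T).2 i) := by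
  rcases var_or_app T with ⟨n, rfl⟩ | ⟨A, c, rfl⟩
  · exact i.elim
  · exact ⟨A, c, rfl, i, rfl⟩

/-- The coalgebra step of `GTerm.subst`; the flag records whether we are still above the
substituted variables. -/
def substStep (σ : ℕ → GTerm S) (st : Bool × GTerm S) : S.P (Bool × GTerm S) :=
  match M.dest st.2 with
  | ⟨Sum.inl A, c⟩ => ⟨Sum.inl A, fun i => (st.1, c i)⟩
  | ⟨Sum.inr n, _⟩ =>
    if st.1 then ⟨(M.dest (σ n)).1, fun i => (false, (M.dest (σ n)).2 i)⟩
    else ⟨Sum.inr n, fun e => e.elim⟩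

theorem corec_substStep_app (σ : ℕ → GTerm S) (b : Bool) (A : Fin S.ntCount)
    (c : Fin (S.arity A) → GTerm S) :
    M.corec (substStep σ) (b, app A c) = app A fun i => M.corec (substStep σ) (b, c i) := by
  rw [← M.mk_dest (M.corec _ _), M.dest_corec]
  rfl

theorem corec_substStep_false (σ : ℕ → GTerm S) (T : GTerm S) :
    M.corec (substStep σ) (false, T) = T := by
  refine eq_of_bisim (fun x y => x = M.corec (substStep σ) (false, y)) ?_ rfl
  rintro x y rfl
  rcases var_or_app y with ⟨n, rfl⟩ | ⟨A, c, rfl⟩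
  · refine .inl ⟨n, ?_, rfl⟩
    rw [← M.mk_dest (M.corec _ _), M.dest_corec]
    exact mk_inr_eq_var n _
  · exact .inr ⟨A, _, c, corec_substStep_app σ false A c, rfl, fun i => rfl⟩

theorem subst_var (σ : ℕ → GTerm S) (n : ℕ) : subst σ (var S n) = σ n := by
  change M.corec (substStep σ) (true, var S n) = σ n
  rw [← M.mk_dest (M.corec _ _), M.dest_corec, ← M.mk_dest (σ n)]
  exact congrArg (fun c => M.mk (F := S.P) ⟨(M.dest (σ n)).1, c⟩)
    (funext fun i => corec_substStep_false σ _)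

theorem subst_app (σ : ℕ → GTerm S) (A : Fin S.ntCount) (c : Fin (S.arity A) → GTerm S) :
    subst σ (app A c) = app A fun i => subst σ (c i) :=
  corec_substStep_app σ true A c

theorem subst_toTerm_congr {σ τ : ℕ → GTerm S} (E : FTerm S)
    (h : ∀ n, E.VOccurs n → σ n = τ n) : subst σ E.toTerm = subst τ E.toTerm := by
  induction E with
  | var n => exact (subst_var σ n).trans ((h n rfl).trans (subst_var τ n).symm)
  | app A c ih =>
    simp only [FTerm.toTerm, subst_app]
    exact congrArg (app A) (funext fun i => ih i fun n hn => h n ⟨i, hn⟩)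

theorem subst_subst_toTerm (τ σ : ℕ → GTerm S) (E : FTerm S) :
    subst τ (subst σ E.toTerm) = subst (fun n => subst τ (σ n)) E.toTerm := by
  induction E with
  | var n => simp only [FTerm.toTerm, subst_var]
  | app A c ih => simp only [FTerm.toTerm, subst_app, ih]

theorem subst_var_subst_var {f g : ℕ → ℕ} (hfg : Function.LeftInverse f g) (T : GTerm S) :
    subst (fun n => var S (f n)) (subst (fun n => var S (g n)) T) = T := by
  refine eq_of_bisim (fun x y => x = subst (fun n => var S (f n)) (subst (fun n => var S (g n)) y))
    ?_ rfl
  rintro x y rfl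
  rcases var_or_app y with ⟨n, rfl⟩ | ⟨A, c, rfl⟩
  · exact .inl ⟨n, by rw [subst_var, subst_var, hfg n], rfl⟩
  · exact .inr ⟨A, _, c, by rw [subst_app, subst_app], rfl, fun i => rfl⟩

def rename (π : Equiv.Perm ℕ) : GTerm S ≃ GTerm S where
  toFun := subst fun n => var S (π n)
  invFun := subst fun n => var S (π.symm n)
  left_inv := subst_var_subst_var π.left_inv
  right_inv := subst_var_subst_var π.right_inv

theorem rename_symm (π : Equiv.Perm ℕ) : (rename π).symm = rename (S := S) π.symm := rfl

theorem rename_var (π : Equiv.Perm ℕ) (n : ℕ) : rename π (var S n) = var S (π n) := subst_var _ n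

theorem rename_app (π : Equiv.Perm ℕ) (A : Fin S.ntCount) (c : Fin (S.arity A) → GTerm S) :
    rename π (app A c) = app A fun i => rename π (c i) := subst_app _ A c

theorem rename_subst_toTerm (π : Equiv.Perm ℕ) (σ : ℕ → GTerm S) (E : FTerm S) :
    rename π (subst σ E.toTerm) = subst (fun n => rename π (σ n)) E.toTerm :=
  subst_subst_toTerm _ σ E

end GTerm

open GTerm

def lhsFTerm {S : GrammarSig} (A : Fin S.ntCount) : FTerm S := .app A fun i => .var i

theorem toTerm_lhsFTerm {S : GrammarSig} (A : Fin S.ntCount) :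
    (lhsFTerm A).toTerm = lhsTerm A := rfl

theorem lt_arity_of_vOccurs_lhsFTerm {S : GrammarSig} {A : Fin S.ntCount} {n : ℕ}
    (h : (lhsFTerm A).VOccurs n) : n < S.arity A := by
  obtain ⟨i, rfl⟩ := h
  exact i.isLt

theorem subst_lhsTerm {S : GrammarSig} (σ : ℕ → GTerm S) (A : Fin S.ntCount) :
    subst σ (lhsTerm A) = app A fun i => σ i := by
  rw [lhsTerm, subst_app]
  simp only [subst_var]

/-- Only the variables below the arity of `r.nt` matter, so finite support is no restriction. -/
theorem LTSrul_tr_iff (G : FOGrammar) (r : GRule G.sig) (T T' : GTerm G.sig) :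
    (LTSrul G).Tr r T T' ↔ r ∈ G.rules ∧
      ∃ σ : ℕ → GTerm G.sig, T = subst σ (lhsTerm r.nt) ∧ T' = subst σ r.rhs.toTerm := by
  refine ⟨fun ⟨hr, σ, _, hT, hT'⟩ => ⟨hr, σ, hT, hT'⟩, fun ⟨hr, σ, hT, hT'⟩ => ?_⟩
  classical
  let σ' : ℕ → GTerm G.sig := fun n => if n < G.sig.arity r.nt then σ n else var _ n
  have hσ' : ∀ E : FTerm G.sig, (∀ n, E.VOccurs n → n < G.sig.arity r.nt) →
      subst σ' E.toTerm = subst σ E.toTerm :=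
    fun E hE => subst_toTerm_congr E fun n hn => if_pos (hE n hn)
  refine ⟨hr, σ', (Set.finite_lt_nat (G.sig.arity r.nt)).subset fun n hn => ?_, ?_, ?_⟩
  · by_contra hlt
    exact hn (if_neg hlt)
  · rw [hT, ← toTerm_lhsFTerm, hσ' _ fun n => lt_arity_of_vOccurs_lhsFTerm]
  · rw [hT', hσ' _ r.rhs_wf]

theorem LTSrul_tr_unique {G : FOGrammar} {r : GRule G.sig} {T T₁ T₂ : GTerm G.sig}
    (h₁ : (LTSrul G).Tr r T T₁) (h₂ : (LTSrul G).Tr r T T₂) : T₁ = T₂ := by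
  obtain ⟨-, σ₁, hT₁, rfl⟩ := (LTSrul_tr_iff G r T T₁).1 h₁
  obtain ⟨-, σ₂, hT₂, rfl⟩ := (LTSrul_tr_iff G r T T₂).1 h₂
  have hσ := app_injective _ ((subst_lhsTerm σ₁ r.nt).symm.trans (hT₁.symm.trans
    (hT₂.trans (subst_lhsTerm σ₂ r.nt))))
  exact subst_toTerm_congr _ fun n hn => congrFun hσ ⟨n, r.rhs_wf n hn⟩

theorem LTSrul_tr_rename {G : FOGrammar} (π : Equiv.Perm ℕ) {r : GRule G.sig}
    {T T' : GTerm G.sig} (h : (LTSrul G).Tr r T T') :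
    (LTSrul G).Tr r (rename π T) (rename π T') := by
  obtain ⟨hr, σ, rfl, rfl⟩ := (LTSrul_tr_iff G r T T').1 h
  refine (LTSrul_tr_iff G r _ _).2 ⟨hr, fun n => rename π (σ n), ?_, rename_subst_toTerm π σ _⟩
  rw [← toTerm_lhsFTerm, rename_subst_toTerm]

theorem imageFinite_LTSact (G : FOGrammar) : (LTSact G).ImageFinite := by
  rintro (a | n) T
  · refine (G.rules.finite_toSet.biUnion fun r _ => Set.Subsingleton.finite
      (s := {T' | (LTSrul G).Tr r T T'}) fun _ h₁ _ h₂ => LTSrul_tr_unique h₁ h₂).subset ?_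
    rintro T' ⟨r, -, hr⟩
    exact Set.mem_biUnion hr.1 hr
  · exact (Set.finite_singleton (var G.sig n)).subset fun T' h => h.2

def renameAct (m : ℕ) (π : Equiv.Perm ℕ) : Fin m ⊕ ℕ ≃ Fin m ⊕ ℕ :=
  Equiv.sumCongr (Equiv.refl _) π

theorem renameAct_symm (m : ℕ) (π : Equiv.Perm ℕ) : (renameAct m π).symm = renameAct m π.symm := rfl

theorem LTSact_tr_rename {G : FOGrammar} (π : Equiv.Perm ℕ) {a : Fin G.sig.actCount ⊕ ℕ}
    {T T' : GTerm G.sig} (h : (LTSact G).Tr a T T') :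
    (LTSact G).Tr (renameAct _ π a) (rename π T) (rename π T') := by
  rcases a with a | n
  · obtain ⟨r, hra, hr⟩ := h
    exact ⟨r, hra, LTSrul_tr_rename π hr⟩
  · obtain ⟨rfl, rfl⟩ := h
    exact ⟨rename_var π n, rename_var π n⟩

theorem LTSact_tr_rename_iff (G : FOGrammar) (π : Equiv.Perm ℕ) (a : Fin G.sig.actCount ⊕ ℕ)
    (T T' : GTerm G.sig) :
    (LTSact G).Tr (renameAct _ π a) (rename π T) (rename π T') ↔ (LTSact G).Tr a T T' := by
  refine ⟨fun h => ?_, LTSact_tr_rename π⟩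
  have := LTSact_tr_rename π.symm h
  rwa [← rename_symm, ← renameAct_symm, Equiv.symm_apply_apply, Equiv.symm_apply_apply,
    Equiv.symm_apply_apply] at this

section Renaming

variable {S : GrammarSig}

theorem childRel_rename (π : Equiv.Perm ℕ) {T T' : GTerm S} (h : childRel S T T') :
    childRel S (rename π T) (rename π T') := by
  obtain ⟨A, c, rfl, i, rfl⟩ := h
  exact ⟨A, fun j => rename π (c j), rename_app π A c, i, rfl⟩

theorem subtermOf_rename (π : Equiv.Perm ℕ) {U T : GTerm S} (h : SubtermOf S U T) :
    SubtermOf S (rename π U) (rename π T) :=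
  Relation.ReflTransGen.lift (rename π) (fun _ _ => childRel_rename π) _ _ h

theorem setOf_subtermOf_rename (π : Equiv.Perm ℕ) (T : GTerm S) :
    {U | SubtermOf S U (rename π T)} = rename π '' {U | SubtermOf S U T} := by
  refine Set.Subset.antisymm (fun U hU => ⟨(rename π).symm U, ?_, Equiv.apply_symm_apply _ U⟩)
    (Set.image_subset_iff.2 fun U => subtermOf_rename π)
  have h := subtermOf_rename π.symm hU
  rwa [← rename_symm, Equiv.symm_apply_apply] at h

theorem regularT_rename (π : Equiv.Perm ℕ) {T : GTerm S} (h : RegularT S T) :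
    RegularT S (rename π T) := by
  rw [RegularT, setOf_subtermOf_rename]
  exact h.image _

theorem pressize_rename (π : Equiv.Perm ℕ) (T : GTerm S) :
    pressize S (rename π T) = pressize S T := by
  rw [pressize, setOf_subtermOf_rename, Set.ncard_image_of_injective _ (rename π).injective,
    pressize]

theorem varOccurs_rename_iff (π : Equiv.Perm ℕ) {n : ℕ} {T : GTerm S} :
    VarOccurs S (π n) (rename π T) ↔ VarOccurs S n T := by
  refine ⟨fun h => ?_, fun h => ?_⟩
  · have h' := subtermOf_rename π.symm h
    rwa [rename_var, Equiv.symm_apply_apply, ← rename_symm, Equiv.symm_apply_apply] at h'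
  · simpa only [VarOccurs, rename_var] using subtermOf_rename π h

/-- Every variable occurring in a term is one of its subterms. -/
theorem exists_perm_varOccurs_rename_lt {E F : GTerm S} (hE : RegularT S E) (hF : RegularT S F) :
    ∃ π : Equiv.Perm ℕ, ∀ n, VarOccurs S n (rename π E) ∨ VarOccurs S n (rename π F) →
      n < pressize S E + pressize S F := by
  set V := {n | VarOccurs S n E ∨ VarOccurs S n F}
  set W := {U | SubtermOf S U E} ∪ {U | SubtermOf S U F}
  have hVW : ∀ n ∈ V, var S n ∈ W := fun _ hn => hn
  have hV : V.Finite := (hE.union hF).preimage var_injective.injOn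
  have hcard : hV.toFinset.card ≤ pressize S E + pressize S F := by
    rw [← Set.ncard_eq_toFinset_card V hV]
    exact (Set.ncard_le_ncard_of_injOn _ hVW var_injective.injOn (hE.union hF)).trans
      (Set.ncard_union_le _ _)
  obtain ⟨π, hπ⟩ := Equiv.Perm.exists_map_finset_eq hV.toFinset (Finset.range hV.toFinset.card)
    (Finset.card_range _).symm
  refine ⟨π, fun n hn => ?_⟩
  rw [← π.apply_symm_apply n, varOccurs_rename_iff, varOccurs_rename_iff] at hn
  have hmem := Finset.mem_map_of_mem π.toEmbedding (hV.mem_toFinset.2 hn)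
  rw [hπ, Equiv.toEmbedding_apply, Equiv.apply_symm_apply, Finset.mem_range] at hmem
  exact hmem.trans_le hcard

end Renaming

theorem LTSact_eqlevel_rename (G : FOGrammar) (π : Equiv.Perm ℕ) (E F : GTerm G.sig) :
    (LTSact G).eqlevel (rename π E) (rename π F) = (LTSact G).eqlevel E F :=
  LTS.eqlevel_eq_of_equiv _ _ (rename π) (renameAct _ π) (LTSact_tr_rename_iff G π) E F

section Finiteness

open PFunctor

variable {S : GrammarSig}

instance GrammarSig.finite_P_B (a : S.P.A) : Finite (S.P.B a) := by
  rcases a with A | n <;> dsimp [GrammarSig.P] <;> infer_instance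

/-- A system of equations that describes each term of the child-closed set `s` at the state
`code` assigns to it unfolds to that term. -/
theorem corec_code_eq {α : Type*} (sys : α → S.P α) (code : GTerm S → α) {s : Set (GTerm S)}
    (hs : ∀ U ∈ s, ∀ U', childRel S U U' → U' ∈ s)
    (hsys : ∀ U ∈ s, sys (code U) = S.P.map code (M.dest U)) {U : GTerm S} (hU : U ∈ s) :
    M.corec sys (code U) = U :=
  M.bisim' (· ∈ s) (fun U => M.corec sys (code U)) id (fun U hU =>
    ⟨(M.dest U).1, _, (M.dest U).2, by rw [M.dest_corec, hsys U hU]; rfl, rfl,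
      fun i => ⟨_, hs U hU _ (childRel_dest U i), rfl, rfl⟩⟩) U hU

theorem finite_setOf_pressize_le_of_labels (b : ℕ) {L : Set S.P.A} (hL : L.Finite) :
    {T | RegularT S T ∧ pressize S T ≤ b ∧ ∀ U, SubtermOf S U T → (M.dest U).1 ∈ L}.Finite := by
  let Sys (n : ℕ) : Set (Fin n → S.P (Fin n)) := Set.univ.pi fun _ => {x | x.1 ∈ L}
  have hSys (n : ℕ) : (Sys n).Finite := Set.Finite.pi fun _ =>
    (hL.biUnion fun a _ => Set.finite_range (Sigma.mk a)).subset fun x hx =>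
      Set.mem_biUnion hx ⟨x.2, rfl⟩
  refine ((Set.finite_Iic b).biUnion fun n _ => ((hSys n).prod Set.finite_univ).image
    fun p => M.corec p.1 p.2).subset ?_
  rintro T ⟨hT, hsize, hlabel⟩
  obtain ⟨n, f, hf⟩ := hT.fin_embedding
  have hn : n ≤ b := by
    rwa [pressize, ← hf, Set.ncard_range_of_injective f.injective, Nat.card_eq_fintype_card,
      Fintype.card_fin] at hsize
  have hTf : T ∈ Set.range f := by rw [hf]; exact Relation.ReflTransGen.refl
  have : Nonempty (Fin n) := ⟨hTf.choose⟩
  let code := Function.invFun f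
  have hcode : ∀ U ∈ Set.range f, f (code U) = U := fun U hU => Function.invFun_eq hU
  let sys : Fin n → S.P (Fin n) := fun j => S.P.map code (M.dest (f j))
  have hsub : ∀ j, SubtermOf S (f j) T := fun j => hf.subset (Set.mem_range_self j)
  refine Set.mem_biUnion (Set.mem_Iic.2 hn) ⟨(sys, code T), ⟨fun j _ => hlabel _ (hsub j), trivial⟩,
    corec_code_eq sys code (s := Set.range f) (fun U hU U' hUU' => ?_)
      (fun U hU => by simp only [sys, hcode U hU]) hTf⟩
  rw [hf] at hU ⊢
  exact hU.tail hUU'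

theorem finite_setOf_pressize_le_of_varOccurs_lt (b : ℕ) :
    {T | RegularT S T ∧ pressize S T ≤ b ∧ ∀ n, VarOccurs S n T → n < b}.Finite := by
  let L : Set S.P.A := {a | ∀ n, a = Sum.inr n → n < b}
  have hL : L.Finite := ((Set.finite_range Sum.inl).union ((Set.finite_Iio b).image Sum.inr)).subset
    fun a ha => by
      rcases a with A | n
      · exact .inl ⟨A, rfl⟩
      · exact .inr ⟨n, ha n rfl, rfl⟩
  refine (finite_setOf_pressize_le_of_labels b hL).subset fun T ⟨hT, hsize, hvar⟩ =>
    ⟨hT, hsize, fun U hU n hn => hvar n ?_⟩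
  rwa [VarOccurs, ← eq_var_of_dest_fst_eq_inr hn]

end Finiteness

/-- for every bound `b` there is `m ∈ ℕ` such that every pair `(E,F)` of
regular terms with `pressize(E) + pressize(F) ≤ b` and `E ≁ F` (in `L^act_G`)
satisfies `eqlevel(E,F) ≤ m`; i.e. `MaxEqLev(Size_{≤b} ∩ ≁)` is finite. -/
theorem bounded_size_nonbisim_eqlevel_bounded (G : FOGrammar) (b : ℕ) :
    ∃ m : ℕ, ∀ E F : GTerm G.sig,
      RegularT G.sig E → RegularT G.sig F →
      pressize G.sig E + pressize G.sig F ≤ b →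
      ¬ (LTSact G).Bisim E F →
      (LTSact G).eqlevel E F ≤ (m : ℕ∞) := by
  set Q := {T | RegularT G.sig T ∧ pressize G.sig T ≤ b ∧ ∀ n, VarOccurs G.sig n T → n < b}
  have hQ : Q.Finite := finite_setOf_pressize_le_of_varOccurs_lt b
  refine ⟨(hQ.prod hQ).toFinset.sup fun p => ((LTSact G).eqlevel p.1 p.2).toNat, ?_⟩
  intro E F hE hF hsize hEF
  obtain ⟨π, hπ⟩ := exists_perm_varOccurs_rename_lt hE hF
  have hE' : rename π E ∈ Q := ⟨regularT_rename π hE, (pressize_rename π E).trans_le (by omega),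
    fun n hn => (hπ n (.inl hn)).trans_le hsize⟩
  have hF' : rename π F ∈ Q := ⟨regularT_rename π hF, (pressize_rename π F).trans_le (by omega),
    fun n hn => (hπ n (.inr hn)).trans_le hsize⟩
  have hfinite : (LTSact G).eqlevel (rename π E) (rename π F) ≠ ⊤ := by
    rw [LTSact_eqlevel_rename]
    exact (LTSact G).eqlevel_ne_top_of_not_bisim (imageFinite_LTSact G) hEF
  rw [← LTSact_eqlevel_rename G π, ← ENat.natCast_toNat hfinite]
  exact_mod_cast Finset.le_sup (f := fun p : GTerm G.sig × GTerm G.sig =>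
    ((LTSact G).eqlevel p.1 p.2).toNat) ((hQ.prod hQ).mem_toFinset.2 (Set.mk_mem_prod hE' hF'))
end
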